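/- Let A be an n-dimensional (n ≥ 2) non-degenerate evolution algebra over an algebraically closed field F of characteristic zero with dim(A²) = 1. If (A²)² ≠ 0, then A is isomorphic to the evolution algebra E_n defined on a basis {e_1,...,e_n} by e_i² = e_1 for all i and e_i e_j = 0 for i ≠ j. -/

import Mathlib

/-!
An evolution algebra is commutative, so when `A² = F ∙ w` the product is `x * y = B x y • w`
for a symmetric bilinear form `B`, and non-degeneracy of `A` is non-degeneracy of `B`.
`(A²)² ≠ 0` means `w * w ≠ 0`, so `w` can be rescaled to an idempotent `e`, i.e. `B e e = 1`.
Over an algebraically closed field of characteristic `≠ 2`, the orthogonal complement of `e`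
has a `B`-orthonormal basis; together with `e` it gives coordinates in which
`x * y = (∑ xᵢ yᵢ) • e₀`, which is the product of `E_n`.
-/

open Module

/-- The evolution algebra `E_n` realized on `Fin (n+2) → F`: `eᵢ² = e₀` for all `i`
and `eᵢeⱼ = 0` for `i ≠ j`. -/
def enMul {F : Type*} [Field F] {n : ℕ} (x y : Fin (n + 2) → F) : Fin (n + 2) → F :=
  fun k => if k = 0 then ∑ i, x i * y i else 0

/-- The product of two subspaces. -/
def mulSub {F : Type*} [Field F] {A : Type*} [NonUnitalNonAssocRing A] [Module F A]
    (P Q : Submodule F A) : Submodule F A :=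
  Submodule.span F {z | ∃ x ∈ P, ∃ y ∈ Q, z = x * y}

open LinearMap (BilinForm)

section Orthonormal

variable {F V : Type*} [Field F] [AddCommGroup V] [Module F V] {B : BilinForm F V}

theorem LinearMap.BilinForm.linearIndependent_of_orthonormal {ι : Type*} [DecidableEq ι]
    {v : ι → V} (hv : ∀ i j, B (v i) (v j) = if i = j then 1 else 0) :
    LinearIndependent F v :=
  B.linearIndependent_of_iIsOrtho (B.iIsOrtho_def.2 fun i j hij => by simp [hv, hij])
    fun i => by simp [hv]

theorem LinearMap.BilinForm.apply_eq_sum_repr_mul_repr {ι : Type*} [Fintype ι] [DecidableEq ι]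
    (u : Basis ι F V) (hu : ∀ i j, B (u i) (u j) = if i = j then 1 else 0) (x y : V) :
    B x y = ∑ i, u.repr x i * u.repr y i := by
  rw [← B.sum_repr_mul_repr_mul u x y]
  simp [Finsupp.sum_fintype, hu]

theorem LinearMap.BilinForm.exists_orthonormal_basis [IsAlgClosed F] [Invertible (2 : F)]
    [FiniteDimensional F V] (hs : LinearMap.IsSymm B) (hB : B.Nondegenerate) {m : ℕ}
    (hm : finrank F V = m) :
    ∃ v : Basis (Fin m) F V, ∀ i j, B (v i) (v j) = if i = j then 1 else 0 := by
  subst hm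
  obtain ⟨v, hv⟩ := LinearMap.BilinForm.exists_orthogonal_basis hs
  have hdiag i : B (v i) (v i) ≠ 0 := hv.not_isOrtho_basis_self_of_separatingLeft hB.1 i
  choose s hs using fun i => IsAlgClosed.exists_eq_mul_self (B (v i) (v i))
  have hs0 i : s i ≠ 0 := by rintro h; exact hdiag i (by simp [hs, h])
  refine ⟨v.unitsSMul fun i => Units.mk0 (s i)⁻¹ (inv_ne_zero (hs0 i)), fun i j => ?_⟩
  rcases eq_or_ne i j with rfl | hij
  · simp [Basis.unitsSMul_apply, hs, hs0]
  · simp [Basis.unitsSMul_apply, hv hij, hij]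

theorem LinearMap.BilinForm.exists_orthonormal_basis_zero_eq [IsAlgClosed F]
    [Invertible (2 : F)] [FiniteDimensional F V] (hs : LinearMap.IsSymm B)
    (hB : B.Nondegenerate) {m : ℕ} (hm : finrank F V = m + 1) {e : V} (he : B e e = 1) :
    ∃ u : Basis (Fin (m + 1)) F V, u 0 = e ∧
      ∀ i j, B (u i) (u j) = if i = j then 1 else 0 := by
  set W := B.orthogonal (F ∙ e)
  have hcompl : IsCompl (F ∙ e) W := B.isCompl_span_singleton_orthogonal (by simp [he])
  have hWrank : finrank F W = m := by
    have := Submodule.finrank_add_eq_of_isCompl hcompl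
    rw [finrank_span_singleton (by rintro rfl; simp at he), hm] at this
    omega
  have hWnd : (B.restrict W).Nondegenerate := by
    refine B.nondegenerate_restrict_of_disjoint_orthogonal hs.isRefl ?_
    rw [B.orthogonal_orthogonal hB hs.isRefl]
    exact hcompl.disjoint.symm
  obtain ⟨v, hv⟩ := (B.restrict W).exists_orthonormal_basis (hs.domRestrict W) hWnd hWrank
  have heW (w : W) : B e w = 0 := w.2 e (Submodule.mem_span_singleton_self e)
  have hWe (w : W) : B w e = 0 := hs.eq_iff.1 (heW w)
  let u : Fin (m + 1) → V := Fin.cons e (W.subtype ∘ v)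
  have hu : ∀ i j, B (u i) (u j) = if i = j then 1 else 0 := by
    intro i j
    cases i using Fin.cases <;> cases j using Fin.cases <;>
      simp [u, he, heW, hWe, Fin.succ_ne_zero, (Fin.succ_ne_zero _).symm, ← hv,
        B.restrict_apply]
  refine ⟨basisOfLinearIndependentOfCardEqFinrank
    (B.linearIndependent_of_orthonormal hu) (by simp [hm]), by simp [u], ?_⟩
  simpa using hu

end Orthonormal

theorem mul_mem_mulSub {F A : Type*} [Field F] [NonUnitalNonAssocRing A] [Module F A]
    {P Q : Submodule F A} {x y : A} (hx : x ∈ P) (hy : y ∈ Q) : x * y ∈ mulSub P Q :=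
  Submodule.subset_span ⟨x, hx, y, hy, rfl⟩

section MulSingleton

variable {F A : Type*} [Field F] [NonUnitalNonAssocRing A] [Module F A]
  [SMulCommClass F A A] [IsScalarTower F A A]

theorem mul_comm_of_basis_mul_eq_zero {ι : Type*} (b : Basis ι F A)
    (hb : ∀ i j, i ≠ j → b i * b j = 0) (x y : A) : x * y = y * x := by
  have : LinearMap.mul F A = (LinearMap.mul F A).flip :=
    LinearMap.ext_basis b b fun i j => by
      rcases eq_or_ne i j with rfl | hij
      · rfl
      · simp [hb i j hij, hb j i hij.symm]
  exact LinearMap.congr_fun₂ this x y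

theorem mulSub_span_singleton_self (w : A) : mulSub (F ∙ w) (F ∙ w) = F ∙ (w * w) := by
  refine le_antisymm (Submodule.span_le.2 ?_) ((Submodule.span_singleton_le_iff_mem _ _).2
    (mul_mem_mulSub (Submodule.mem_span_singleton_self w) (Submodule.mem_span_singleton_self w)))
  rintro _ ⟨x, hx, y, hy, rfl⟩
  obtain ⟨a, rfl⟩ := Submodule.mem_span_singleton.1 hx
  obtain ⟨c, rfl⟩ := Submodule.mem_span_singleton.1 hy
  rw [smul_mul_smul_comm]
  exact Submodule.smul_mem _ _ (Submodule.mem_span_singleton_self _)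

theorem exists_idempotent_span_singleton_eq {w : A} (hw : w * w ∈ F ∙ w) (hww : w * w ≠ 0) :
    ∃ e : A, e ≠ 0 ∧ e * e = e ∧ (F ∙ e) = F ∙ w := by
  obtain ⟨c, hc⟩ := Submodule.mem_span_singleton.1 hw
  have hc0 : c ≠ 0 := by rintro rfl; simp [← hc] at hww
  have hw0 : w ≠ 0 := by rintro rfl; simp at hww
  refine ⟨c⁻¹ • w, smul_ne_zero (inv_ne_zero hc0) hw0, ?_,
    Submodule.span_singleton_smul_eq (inv_ne_zero hc0).isUnit w⟩
  rw [smul_mul_smul_comm, ← hc, smul_smul, mul_assoc, inv_mul_cancel₀ hc0, mul_one]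

theorem exists_bilinForm_mul_eq_smul {e : A} (he : e ≠ 0) (h : ∀ x y : A, x * y ∈ F ∙ e) :
    ∃ B : BilinForm F A, ∀ x y, x * y = B x y • e := by
  obtain ⟨f, hf⟩ := Projective.exists_dual_eq_one F he
  refine ⟨(LinearMap.mul F A).compr₂ f, fun x y => ?_⟩
  obtain ⟨c, hc⟩ := Submodule.mem_span_singleton.1 (h x y)
  simp [← hc, hf]

end MulSingleton

section MulEqSmul

variable {F A : Type*} [Field F] [NonUnitalNonAssocRing A] [Module F A]
  {B : BilinForm F A} {e : A}

theorem LinearMap.BilinForm.isSymm_of_mul_eq_smul (he : e ≠ 0)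
    (hBe : ∀ x y, x * y = B x y • e) (hcomm : ∀ x y : A, x * y = y * x) :
    LinearMap.IsSymm B :=
  ⟨fun x y => smul_left_injective F he (by simp [← hBe, hcomm x y])⟩

theorem LinearMap.BilinForm.nondegenerate_of_mul_eq_smul (he : e ≠ 0)
    (hBe : ∀ x y, x * y = B x y • e) (hcomm : ∀ x y : A, x * y = y * x)
    (hnd : ∀ x : A, (∀ a : A, x * a = 0 ∧ a * x = 0) → x = 0) : B.Nondegenerate := by
  refine (B.isSymm_of_mul_eq_smul he hBe hcomm).isRefl.nondegenerate_iff_separatingLeft.2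
    fun x hx => hnd x fun a => ?_
  have hxa : x * a = 0 := by rw [hBe, hx a, zero_smul]
  exact ⟨hxa, hcomm a x ▸ hxa⟩

theorem LinearMap.BilinForm.apply_self_eq_one_of_mul_eq_smul (he : e ≠ 0)
    (hBe : ∀ x y, x * y = B x y • e) (hee : e * e = e) : B e e = 1 :=
  smul_left_injective F he (by simp [← hBe, hee])

theorem Module.Basis.equivFun_mul_eq_enMul {n : ℕ} (u : Basis (Fin (n + 2)) F A)
    (hu : ∀ i j, B (u i) (u j) = if i = j then 1 else 0) (hBu : ∀ x y, x * y = B x y • u 0)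
    (x y : A) : u.equivFun (x * y) = enMul (u.equivFun x) (u.equivFun y) := by
  ext k
  rw [hBu, map_smul, Pi.smul_apply, u.equivFun_self, B.apply_eq_sum_repr_mul_repr u hu]
  rcases eq_or_ne k 0 with rfl | hk
  · simp [enMul]
  · simp [enMul, hk, hk.symm]

end MulEqSmul

/-- **Classification, case `(A²)² ≠ 0`.** A non-degenerate evolution algebra `A` of
dimension `n ≥ 2` over an algebraically closed field of characteristic zero with
`dim A² = 1` and `(A²)² ≠ 0` is isomorphic to `E_n`. -/
theorem stmt_5 {F : Type*} [Field F] [IsAlgClosed F] [CharZero F]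
    {A : Type*} [NonUnitalNonAssocRing A] [Module F A]
    [SMulCommClass F A A] [IsScalarTower F A A]
    {n : ℕ} (b : Basis (Fin (n + 2)) F A)
    (hb : ∀ i j : Fin (n + 2), i ≠ j → b i * b j = 0)
    (hnd : ∀ x : A, (∀ a : A, x * a = 0 ∧ a * x = 0) → x = 0)
    (hsq : finrank F (mulSub (⊤ : Submodule F A) ⊤) = 1)
    (hsq2 : mulSub (mulSub (⊤ : Submodule F A) ⊤) (mulSub (⊤ : Submodule F A) ⊤) ≠ ⊥) :
    ∃ φ : A ≃ₗ[F] (Fin (n + 2) → F), ∀ x y : A, φ (x * y) = enMul (φ x) (φ y) := by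
  have : FiniteDimensional F A := b.finiteDimensional_of_finite
  have : Invertible (2 : F) := invertibleOfNonzero two_ne_zero
  have hcomm := mul_comm_of_basis_mul_eq_zero b hb
  obtain ⟨w, hw⟩ := ((mulSub ⊤ ⊤).finrank_le_one_iff_isPrincipal.1 hsq.le).principal
  have hmul (x y : A) : x * y ∈ F ∙ w := hw ▸ mul_mem_mulSub Submodule.mem_top Submodule.mem_top
  have hww : w * w ≠ 0 := by simpa [hw, mulSub_span_singleton_self] using hsq2
  obtain ⟨e, he, hee, hew⟩ := exists_idempotent_span_singleton_eq (hmul w w) hww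
  obtain ⟨B, hBe⟩ := exists_bilinForm_mul_eq_smul he (hew ▸ hmul)
  obtain ⟨u, hu0, hu⟩ := B.exists_orthonormal_basis_zero_eq
    (B.isSymm_of_mul_eq_smul he hBe hcomm) (B.nondegenerate_of_mul_eq_smul he hBe hcomm hnd)
    (finrank_eq_card_basis b |>.trans (Fintype.card_fin _))
    (B.apply_self_eq_one_of_mul_eq_smul he hBe hee)
  exact ⟨u.equivFun, u.equivFun_mul_eq_enMul hu (hu0 ▸ hBe)⟩
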